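/- In the intermediate grading group G, set B_t = (½; ½, ½ − t) for integers t ≥ 1. (i) For all integers j ≥ 1, natural numbers k, integers l, and h in the four-element set {gr(ρ2), gr(ρ4), gr(ρ234), gr(ρ412)} = {(−½; ½, ½), (−3/2; −½, −½), (−3/2; −½, ½), (−3/2; ½, −½)}, the equation λ·B_j^{−1}·(−2k; 0, 0)·h·(½; 1, 0)^l = (0; 0, 0) holds if and only if j = 1, h = gr(ρ4) = (−3/2; −½, −½), k = 0, and l = 1. (ii) For all integers i ≥ 1, natural numbers k, integers l, and h in the four-element set {gr(ρ1), gr(ρ3), gr(ρ123), gr(ρ341)} = {(−½; ½, −½), (−½; −½, ½), (−½; ½, ½), (−3/2; −½, −½)}, the equation λ·(−2k; 0, 0)·h·B_i·(½; 1, 0)^l = (0; 0, 0) holds if and only if i = 1, h = gr(ρ123) = (−½; ½, ½), k = 0, and l = −1. (This classifies the permissible differential terms between the generators b_i and x of CFD⁻ of the (p,1)-cable: only ρ4 ⊗ x in δ¹(b_{p−1}) and ρ123 ⊗ b_{p−1} in δ¹(x) are grading-permissible.) -/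

import Mathlib

/-- The underlying carrier of the intermediate grading group `G`: triples `(m; a, b)`
of rational numbers (restricted to half-integers in the membership predicate `memG`),
with multiplication `(m; a, b)·(m′; a′, b′) = (m + m′ + ab′ − a′b; a + a′, b + b′)`. -/
@[ext]
structure IGG where
  m : ℚ
  a : ℚ
  b : ℚ

namespace IGG

instance : Mul IGG :=
  ⟨fun x y => ⟨x.m + y.m + x.a * y.b - y.a * x.b, x.a + y.a, x.b + y.b⟩⟩
instance : One IGG := ⟨⟨0, 0, 0⟩⟩
instance : Inv IGG := ⟨fun x => ⟨-x.m, -x.a, -x.b⟩⟩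

@[simp] theorem mul_m (x y : IGG) : (x * y).m = x.m + y.m + x.a * y.b - y.a * x.b := rfl
@[simp] theorem mul_a (x y : IGG) : (x * y).a = x.a + y.a := rfl
@[simp] theorem mul_b (x y : IGG) : (x * y).b = x.b + y.b := rfl
@[simp] theorem one_m : (1 : IGG).m = 0 := rfl
@[simp] theorem one_a : (1 : IGG).a = 0 := rfl
@[simp] theorem one_b : (1 : IGG).b = 0 := rfl
@[simp] theorem inv_m (x : IGG) : x⁻¹.m = -x.m := rfl
@[simp] theorem inv_a (x : IGG) : x⁻¹.a = -x.a := rfl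
@[simp] theorem inv_b (x : IGG) : x⁻¹.b = -x.b := rfl

instance : Group IGG :=
  Group.ofLeftAxioms
    (fun x y z => by ext <;> simp <;> ring)
    (fun x => by ext <;> simp)
    (fun x => by ext <;> simp)

end IGG

/-- Membership in the intermediate grading group `G`: triples `(m; a, b)` of
half-integers such that `a + b ∈ ℤ` and `m + ((2a+1)(a+b+1)+1)/2 ∈ ℤ`. -/
def memG (x : IGG) : Prop :=
  (∃ n : ℤ, x.m = n / 2) ∧ (∃ n : ℤ, x.a = n / 2) ∧ (∃ n : ℤ, x.b = n / 2) ∧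
  (∃ n : ℤ, x.a + x.b = (n : ℚ)) ∧
  (∃ n : ℤ, x.m + ((2 * x.a + 1) * (x.a + x.b + 1) + 1) / 2 = (n : ℚ))

/-- `λ = (1; 0, 0)`. -/
def lambdaG : IGG := ⟨1, 0, 0⟩
/-- `B_t = (½; ½, ½ − t)`, the `G`-grading of the generator `b_{p−t}` of `CFD⁻` of
the `(p,1)`-cable. -/
def Bgr (t : ℤ) : IGG := ⟨1/2, 1/2, 1/2 - (t : ℚ)⟩

/-
Since `G` is a group, each equation determines `h` uniquely: in (i) it says
`h = (2k − ½ − lj; ½ − l, ½ − j)`, in (ii) `h = (2k − 3/2 − li; −l − ½, i − ½)`. Every listed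
grading has `b = ±½`, so comparing `b`-components forces `j = 1` (resp. `i = 1`), the
`a`-component then fixes `l`, and the `m`-component leaves `k = 0` for exactly one grading;
for the other one it would give `k = −½` (resp. `k = ½`).
-/

namespace IGG

theorem mk_zero_eq_one : (⟨0, 0, 0⟩ : IGG) = 1 := rfl

theorem zpow_eq_mk (x : IGG) (n : ℤ) : x ^ n = ⟨n * x.m, n * x.a, n * x.b⟩ := by
  induction n using Int.induction_on with
  | zero => ext <;> simp
  | succ n ih => rw [zpow_add_one, ih]; ext <;> simp <;> ring
  | pred n ih => rw [zpow_sub_one, ih]; ext <;> simp <;> ring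

end IGG

/-- `gr(ρ2), gr(ρ4), gr(ρ234), gr(ρ412)`. -/
def gradingsFromIotaOne : Set IGG :=
  {⟨-(1/2), 1/2, 1/2⟩, ⟨-(3/2), -(1/2), -(1/2)⟩, ⟨-(3/2), -(1/2), 1/2⟩, ⟨-(3/2), 1/2, -(1/2)⟩}

/-- `gr(ρ1), gr(ρ3), gr(ρ123), gr(ρ341)`. -/
def gradingsFromIotaZero : Set IGG :=
  {⟨-(1/2), 1/2, -(1/2)⟩, ⟨-(1/2), -(1/2), 1/2⟩, ⟨-(1/2), 1/2, 1/2⟩, ⟨-(3/2), -(1/2), -(1/2)⟩}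

theorem lambdaG_mul_Bgr_inv_mul_eq_one_iff (j : ℤ) (k : ℕ) (l : ℤ) (h : IGG) :
    lambdaG * (Bgr j)⁻¹ * ⟨-2 * (k : ℚ), 0, 0⟩ * h * (⟨1/2, 1, 0⟩ : IGG) ^ l = 1 ↔
      h = ⟨2 * k - 1/2 - l * j, 1/2 - l, 1/2 - j⟩ := by
  rw [mul_eq_one_iff_eq_inv, ← eq_inv_mul_iff_mul_eq, ← zpow_neg, IGG.zpow_eq_mk]
  constructor <;> rintro rfl <;> ext <;> simp [lambdaG, Bgr] <;> ring

theorem lambdaG_mul_mul_Bgr_eq_one_iff (i : ℤ) (k : ℕ) (l : ℤ) (h : IGG) :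
    lambdaG * ⟨-2 * (k : ℚ), 0, 0⟩ * h * Bgr i * (⟨1/2, 1, 0⟩ : IGG) ^ l = 1 ↔
      h = ⟨2 * k - 3/2 - l * i, -l - 1/2, i - 1/2⟩ := by
  rw [mul_assoc _ (Bgr i), mul_eq_one_iff_eq_inv, ← eq_inv_mul_iff_mul_eq, mul_inv_rev (Bgr i),
    ← zpow_neg, IGG.zpow_eq_mk]
  constructor <;> rintro rfl <;> ext <;> simp [lambdaG, Bgr] <;> ring

theorem eq_mk_iff_of_mem_gradingsFromIotaOne {j : ℤ} (hj : 1 ≤ j) (k : ℕ) (l : ℤ) {h : IGG}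
    (hh : h ∈ gradingsFromIotaOne) :
    h = ⟨2 * k - 1/2 - l * j, 1/2 - l, 1/2 - j⟩ ↔
      j = 1 ∧ h = ⟨-(3/2), -(1/2), -(1/2)⟩ ∧ k = 0 ∧ l = 1 := by
  simp only [gradingsFromIotaOne, Set.mem_insert_iff, Set.mem_singleton_iff] at hh
  qify at hj
  have hk : (0 : ℚ) ≤ k := k.cast_nonneg
  rcases hh with rfl | rfl | rfl | rfl <;> norm_num
  · intro _ _ hb; linarith
  · constructor
    · rintro ⟨hm, ha, hb⟩
      obtain rfl : j = 1 := by exact_mod_cast (by linarith : (j : ℚ) = 1)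
      obtain rfl : l = 1 := by exact_mod_cast (by linarith : (l : ℚ) = 1)
      exact ⟨rfl, by exact_mod_cast (by linarith : (k : ℚ) = 0), rfl⟩
    · rintro ⟨rfl, rfl, rfl⟩
      norm_num
  · intro _ _ hb; linarith
  · intro hm ha hb
    obtain ⟨hj1, hl0⟩ : (j : ℚ) = 1 ∧ (l : ℚ) = 0 := ⟨by linarith, by linarith⟩
    rw [hj1, hl0] at hm
    linarith

theorem eq_mk_iff_of_mem_gradingsFromIotaZero {i : ℤ} (hi : 1 ≤ i) (k : ℕ) (l : ℤ) {h : IGG}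
    (hh : h ∈ gradingsFromIotaZero) :
    h = ⟨2 * k - 3/2 - l * i, -l - 1/2, i - 1/2⟩ ↔
      i = 1 ∧ h = ⟨-(1/2), 1/2, 1/2⟩ ∧ k = 0 ∧ l = -1 := by
  simp only [gradingsFromIotaZero, Set.mem_insert_iff, Set.mem_singleton_iff] at hh
  qify at hi
  rcases hh with rfl | rfl | rfl | rfl <;> norm_num
  · intro _ _ hb; linarith
  · intro hm ha hb
    obtain ⟨hi1, hl0⟩ : (i : ℚ) = 1 ∧ (l : ℚ) = 0 := ⟨by linarith, by linarith⟩
    rw [hi1, hl0] at hm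
    have h2k : ((2 * k : ℕ) : ℚ) = 1 := by push_cast; linarith
    norm_cast at h2k
    omega
  · constructor
    · rintro ⟨hm, ha, hb⟩
      obtain rfl : i = 1 := by exact_mod_cast (by linarith : (i : ℚ) = 1)
      obtain rfl : l = -1 := by exact_mod_cast (by linarith : (l : ℚ) = -1)
      exact ⟨rfl, by exact_mod_cast (by linarith : (k : ℚ) = 0), rfl⟩
    · rintro ⟨rfl, rfl, rfl⟩
      norm_num
  · intro _ _ hb; linarith

/-- Classifies the permissible differential terms between the generators `b_i` and
`x` of `CFD⁻` of the `(p,1)`-cable.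
(i) For all integers `j ≥ 1`, natural numbers `k`, integers `l`, and `h` in the set
`{gr(ρ2), gr(ρ4), gr(ρ234), gr(ρ412)} = {(−½; ½, ½), (−3/2; −½, −½), (−3/2; −½, ½),
(−3/2; ½, −½)}`, the equation `λ·B_j⁻¹·(−2k; 0, 0)·h·(½; 1, 0)^l = (0; 0, 0)` holds
if and only if `j = 1`, `h = gr(ρ4)`, `k = 0`, and `l = 1`.
(ii) For all integers `i ≥ 1`, natural numbers `k`, integers `l`, and `h` in the set
`{gr(ρ1), gr(ρ3), gr(ρ123), gr(ρ341)} = {(−½; ½, −½), (−½; −½, ½), (−½; ½, ½),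
(−3/2; −½, −½)}`, the equation `λ·(−2k; 0, 0)·h·B_i·(½; 1, 0)^l = (0; 0, 0)` holds
if and only if `i = 1`, `h = gr(ρ123)`, `k = 0`, and `l = −1`. -/
theorem cable_grading_constraint_b_and_x :
    (∀ (j : ℤ), 1 ≤ j → ∀ (k : ℕ) (l : ℤ),
      ∀ h ∈ ({⟨-(1/2), 1/2, 1/2⟩, ⟨-(3/2), -(1/2), -(1/2)⟩,
              ⟨-(3/2), -(1/2), 1/2⟩, ⟨-(3/2), 1/2, -(1/2)⟩} : Set IGG),
        (lambdaG * (Bgr j)⁻¹ * (⟨-2 * (k : ℚ), 0, 0⟩ : IGG) * h *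
            (⟨1/2, 1, 0⟩ : IGG) ^ l = (⟨0, 0, 0⟩ : IGG) ↔
          (j = 1 ∧ h = (⟨-(3/2), -(1/2), -(1/2)⟩ : IGG) ∧ k = 0 ∧ l = 1))) ∧
    (∀ (i : ℤ), 1 ≤ i → ∀ (k : ℕ) (l : ℤ),
      ∀ h ∈ ({⟨-(1/2), 1/2, -(1/2)⟩, ⟨-(1/2), -(1/2), 1/2⟩,
              ⟨-(1/2), 1/2, 1/2⟩, ⟨-(3/2), -(1/2), -(1/2)⟩} : Set IGG),
        (lambdaG * (⟨-2 * (k : ℚ), 0, 0⟩ : IGG) * h * Bgr i *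
            (⟨1/2, 1, 0⟩ : IGG) ^ l = (⟨0, 0, 0⟩ : IGG) ↔
          (i = 1 ∧ h = (⟨-(1/2), 1/2, 1/2⟩ : IGG) ∧ k = 0 ∧ l = -1))) := by
  rw [IGG.mk_zero_eq_one]
  exact ⟨fun j hj k l h hh => by
      rw [lambdaG_mul_Bgr_inv_mul_eq_one_iff, eq_mk_iff_of_mem_gradingsFromIotaOne hj k l hh],
    fun i hi k l h hh => by
      rw [lambdaG_mul_mul_Bgr_eq_one_iff, eq_mk_iff_of_mem_gradingsFromIotaZero hi k l hh]⟩
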